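/- Let N be an even integer with N > 2μ. Then the inverse of T_N(μ) satisfies: ‖T_N(μ)⁻¹‖₁ ≤ 0.806 + 1/20 if μ > 10; ‖T_N(μ)⁻¹‖₁ ≤ 0.736 + 1/200 if μ > 100; and ‖T_N(μ)⁻¹‖₁ ≤ 0.727 + 1/2000 if μ > 1000. The bounds are uniform with respect to the even approximation dimension N. -/

import Mathlib

/-- The `N × N` tridiagonal matrix `T_N(μ)` with diagonal `2, 4, …, 2N`, subdiagonal `μ`
and superdiagonal `-μ` (0-based indexing). -/
noncomputable def Tmat (N : ℕ) (μ : ℝ) : Matrix (Fin N) (Fin N) ℝ :=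
  Matrix.of fun i j =>
    if (i : ℕ) = (j : ℕ) then 2 * (((i : ℕ) : ℝ) + 1)
    else if (i : ℕ) = (j : ℕ) + 1 then μ
    else if (j : ℕ) = (i : ℕ) + 1 then -μ
    else 0

/-- The matrix norm induced by the `‖·‖₁` vector norm: the maximum over columns of the
sum of absolute values of the entries of the column. -/
noncomputable def mat1norm {m n : ℕ} (A : Matrix (Fin m) (Fin n) ℝ) : ℝ :=
  ⨆ l : Fin n, ∑ i : Fin m, |A i l|

/-!
Let `x_1, …, x_N` be the column `L` of `T_N(μ)⁻¹`, padded by `x_0 = x_{N+1} = 0`. As the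
off-diagonal part of `T_N(μ)` is skew, `∑ 2n x_n² = x_L`; this gives invertibility and bounds
every `x_n²` by `x_L / 2n`. Below `L` the entries are nonnegative, beyond `L` they alternate in
sign, so there `μ|x_{n-1}| = μ|x_{n+1}| + 2n|x_n|`. This telescopes the tail,
`∑_{n>K} 2n|x_n| ≤ μ(|x_K| + |x_{K+1}|)`, and a downward induction from `N ≥ μ` gives
`μ|x_{n+1}| ≥ (μ - n - 1)|x_n|`, which together with row `L` yields `(μ + L - 1) x_L ≤ 1`.
Cutting the column at `K = L + ⌊μ⌋`, Cauchy–Schwarz bounds the head by `√(K x_L / 2)` and the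
tail is at most `1/μ`, so every column sum is at most `√((1 + 1/μ)/2) + 1/μ`.
-/

open Finset Matrix

lemma abs_sub_eq_abs_add_abs_of_mul_nonpos {a b : ℝ} (h : a * b ≤ 0) : |a - b| = |a| + |b| := by
  rcases le_total 0 a with ha | ha <;> rcases le_total 0 b with hb | hb
  · obtain rfl | rfl : a = 0 ∨ b = 0 := mul_eq_zero.1 (le_antisymm h (mul_nonneg ha hb))
    all_goals simp
  · rw [abs_of_nonneg (by linarith), abs_of_nonneg ha, abs_of_nonpos hb]; ring
  · rw [abs_of_nonpos (by linarith), abs_of_nonpos ha, abs_of_nonneg hb]; ring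
  · obtain rfl | rfl : a = 0 ∨ b = 0 :=
      mul_eq_zero.1 (le_antisymm h (mul_nonneg_of_nonpos_of_nonpos ha hb))
    all_goals simp

lemma nonneg_of_forward_rec {μ : ℝ} {d X : ℕ → ℝ} {m : ℕ} (hμ : 0 < μ) (hd : ∀ n, 0 ≤ d n)
    (hrow : ∀ n < m, μ * X n + d n * X (n + 1) - μ * X (n + 2) = 0)
    (h₀ : 0 ≤ X 0) (h₁ : 0 ≤ X 1) : ∀ n ≤ m + 1, 0 ≤ X n := by
  suffices ∀ n ≤ m, 0 ≤ X n ∧ 0 ≤ X (n + 1) from fun n hn =>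
    if h : n = m + 1 then h ▸ (this m le_rfl).2 else (this n (by omega)).1
  intro n hn
  induction n with
  | zero => exact ⟨h₀, h₁⟩
  | succ n ih =>
    obtain ⟨hn₀, hn₁⟩ := ih (by omega)
    refine ⟨hn₁, ?_⟩
    have := hrow n (by omega)
    nlinarith [mul_nonneg (hd n) hn₁]

/-- The next row gives `(μ + c) w₂ ≤ μ w₁`; inserting this into the first row reduces the claim
to `(μ - c) (μ² + 2cμ + 2c²) ≤ μ² (μ + c)`, i.e. to `0 ≤ 2c³`. -/
lemma ratio_lower_bound_step {μ c w₀ w₁ w₂ w₃ : ℝ} (hc : 0 ≤ c) (hcμ : c < μ) (hw₁ : 0 ≤ w₁)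
    (h₀ : μ * w₀ = μ * w₂ + 2 * c * w₁) (h₁ : μ * w₁ = μ * w₃ + 2 * (c + 1) * w₂)
    (h₂ : (μ - (c + 2)) * w₂ ≤ μ * w₃) : (μ - c) * w₀ ≤ μ * w₁ := by
  have hμ : 0 < μ := hc.trans_lt hcμ
  have hw₂ : (μ + c) * w₂ ≤ μ * w₁ := by linarith
  have key : μ * (μ + c) * ((μ - c) * w₀) ≤ μ * (μ + c) * (μ * w₁) := by
    have e : μ * (μ + c) * ((μ - c) * w₀)
        = (μ - c) * μ * ((μ + c) * w₂) + 2 * c * (μ + c) * (μ - c) * w₁ := by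
      linear_combination (μ + c) * (μ - c) * h₀
    rw [e]
    nlinarith [mul_le_mul_of_nonneg_left hw₂ (mul_nonneg (sub_nonneg.2 hcμ.le) hμ.le),
      mul_nonneg (pow_nonneg hc 3) hw₁]
  exact le_of_mul_le_mul_left key (by positivity)

noncomputable def pad {N : ℕ} (v : Fin N → ℝ) : ℕ → ℝ
  | 0 => 0
  | n + 1 => if h : n < N then v ⟨n, h⟩ else 0

section pad

variable {N : ℕ} (v : Fin N → ℝ)

@[simp] lemma pad_zero : pad v 0 = 0 := rfl

@[simp] lemma pad_succ (i : Fin N) : pad v (i + 1) = v i := by simp [pad]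

lemma pad_of_lt {n : ℕ} (h : N < n) : pad v n = 0 := by
  obtain ⟨n, rfl⟩ : ∃ m, n = m + 1 := ⟨n - 1, by omega⟩
  simp [pad, show ¬n < N by omega]

lemma sum_ite_val_add_one_eq_pad (n : ℕ) :
    ∑ j : Fin N, (if (j : ℕ) + 1 = n then v j else 0) = pad v n := by
  cases n with
  | zero => simp
  | succ n =>
    by_cases h : n < N
    · have hj : ∀ j : Fin N, ((j : ℕ) + 1 = n + 1) = (j = ⟨n, h⟩) := fun j => by
        simp [Fin.ext_iff]
      simp only [hj, sum_ite_eq', mem_univ, if_true, pad, dif_pos h]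
    · exact (sum_eq_zero fun j _ => if_neg (by omega)).trans (pad_of_lt v (by omega)).symm

end pad

lemma Tmat_mulVec_apply {N : ℕ} (μ : ℝ) (v : Fin N → ℝ) (i : Fin N) :
    (Tmat N μ *ᵥ v) i =
      μ * pad v i + 2 * ((i : ℝ) + 1) * pad v (i + 1) - μ * pad v (i + 2) := by
  have hT : ∀ j, Tmat N μ i j * v j = μ * (if (j : ℕ) + 1 = i then v j else 0)
      + 2 * ((i : ℝ) + 1) * (if (j : ℕ) + 1 = i + 1 then v j else 0)
      - μ * (if (j : ℕ) + 1 = i + 2 then v j else 0) := by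
    intro j
    simp only [Tmat, Matrix.of_apply]
    split_ifs <;> first | (exfalso; omega) | ring
  simp only [Matrix.mulVec, dotProduct, hT, sum_sub_distrib, sum_add_distrib, ← mul_sum,
    sum_ite_val_add_one_eq_pad]

/-- `X` solves `T_N(μ) x = r` in the paper's `1`-based numbering, padded by zeros:
`X (n + 1)` is the coordinate `n : Fin N`, `X 0 = 0 = X n` for `n > N`, and `r n` is the
right-hand side of the (`0`-based) row `n`. -/
structure IsPaddedSolution (μ : ℝ) (N : ℕ) (X r : ℕ → ℝ) : Prop where
  zero : X 0 = 0
  eq_zero_of_lt : ∀ n, N < n → X n = 0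
  row : ∀ n < N, μ * X n + 2 * ((n : ℝ) + 1) * X (n + 1) - μ * X (n + 2) = r n

namespace IsPaddedSolution

variable {μ : ℝ} {N : ℕ} {X r : ℕ → ℝ}

lemma of_mulVec {v : Fin N → ℝ} (h : ∀ i : Fin N, (Tmat N μ *ᵥ v) i = r i) :
    IsPaddedSolution μ N (pad v) r where
  zero := pad_zero v
  eq_zero_of_lt _ := pad_of_lt v
  row n hn := by simpa [Tmat_mulVec_apply] using h ⟨n, hn⟩

/-- The off-diagonal part of `T_N(μ)` is skew, so it drops out of `⟨x, T_N(μ) x⟩`. -/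
lemma energy (h : IsPaddedSolution μ N X r) :
    ∑ n ∈ range N, 2 * ((n : ℝ) + 1) * X (n + 1) ^ 2 = ∑ n ∈ range N, X (n + 1) * r n := by
  have hskew : ∑ n ∈ range N, (X n * X (n + 1) - X (n + 1) * X (n + 2)) = 0 := by
    rw [sum_range_sub' (fun n => X n * X (n + 1)), h.zero, h.eq_zero_of_lt (N + 1) (by omega)]
    ring
  calc ∑ n ∈ range N, 2 * ((n : ℝ) + 1) * X (n + 1) ^ 2
      = ∑ n ∈ range N, (2 * ((n : ℝ) + 1) * X (n + 1) ^ 2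
          + μ * (X n * X (n + 1) - X (n + 1) * X (n + 2))) := by
        rw [sum_add_distrib, ← mul_sum, hskew, mul_zero, add_zero]
    _ = ∑ n ∈ range N, X (n + 1) * r n :=
        sum_congr rfl fun n hn => by rw [← h.row n (mem_range.1 hn)]; ring

end IsPaddedSolution

lemma Tmat_det_ne_zero (N : ℕ) (μ : ℝ) : (Tmat N μ).det ≠ 0 := by
  intro hdet
  obtain ⟨v, hv, hTv⟩ := Matrix.exists_mulVec_eq_zero_iff.2 hdet
  have hsol : IsPaddedSolution μ N (pad v) 0 := .of_mulVec fun i => by simp [hTv]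
  have henergy := hsol.energy
  simp only [Pi.zero_apply, mul_zero, sum_const_zero] at henergy
  rw [sum_eq_zero_iff_of_nonneg fun n _ => by positivity] at henergy
  refine hv (funext fun i => ?_)
  simpa [Nat.cast_add_one_ne_zero] using henergy i (mem_range.2 i.2)

abbrev IsPaddedColumn (μ : ℝ) (N l : ℕ) (X : ℕ → ℝ) : Prop :=
  IsPaddedSolution μ N X fun n => if n = l then 1 else 0

lemma isPaddedColumn_inv (N : ℕ) (μ : ℝ) (l : Fin N) :
    IsPaddedColumn μ N l (pad fun i => (Tmat N μ)⁻¹ i l) :=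
  IsPaddedSolution.of_mulVec fun i => by
    have := congrFun (congrFun (Matrix.mul_nonsing_inv _
      (isUnit_iff_ne_zero.2 (Tmat_det_ne_zero N μ))) i) l
    simpa [Matrix.mul_apply, Matrix.mulVec, dotProduct, Matrix.one_apply, Fin.ext_iff] using this

namespace IsPaddedColumn

variable {μ : ℝ} {N l : ℕ} {X : ℕ → ℝ} (h : IsPaddedColumn μ N l X)
include h

lemma row_of_ne {n : ℕ} (hn : n < N) (hnl : n ≠ l) :
    μ * X n + 2 * ((n : ℝ) + 1) * X (n + 1) - μ * X (n + 2) = 0 := by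
  simpa [hnl] using h.row n hn

lemma row_self (hl : l < N) :
    μ * X l + 2 * ((l : ℝ) + 1) * X (l + 1) - μ * X (l + 2) = 1 := by
  simpa using h.row l hl

lemma weighted_sum_sq_le (hl : l < N) (s : Finset ℕ) :
    ∑ n ∈ s, 2 * ((n : ℝ) + 1) * X (n + 1) ^ 2 ≤ X (l + 1) := by
  have henergy : ∑ n ∈ range N, 2 * ((n : ℝ) + 1) * X (n + 1) ^ 2 = X (l + 1) := by
    rw [h.energy]; simp [hl]
  rw [← henergy, ← sum_filter_of_ne (p := (· < N)) fun n _ hn => ?_]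
  · exact sum_le_sum_of_subset_of_nonneg (fun n hn => by simp_all) fun n _ _ => by positivity
  · by_contra hnN
    exact hn (by rw [h.eq_zero_of_lt (n + 1) (by omega)]; ring)

lemma weighted_sq_le (hl : l < N) (n : ℕ) : 2 * ((n : ℝ) + 1) * X (n + 1) ^ 2 ≤ X (l + 1) := by
  simpa using h.weighted_sum_sq_le hl {n}

lemma diag_pos (hl : l < N) : 0 < X (l + 1) := by
  refine (by simpa using h.weighted_sum_sq_le hl ∅ : 0 ≤ X (l + 1)).lt_of_ne fun h0 => ?_
  have hzero (n : ℕ) : X (n + 1) = 0 := by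
    have := h.weighted_sq_le hl n
    rw [← h0] at this
    exact pow_eq_zero_iff two_ne_zero |>.1 (by nlinarith [sq_nonneg (X (n + 1))])
  have hzero' (n : ℕ) : X n = 0 := by
    cases n
    exacts [h.zero, hzero _]
  simpa [hzero'] using h.row_self hl

lemma pred_diag_nonneg (hμ : 0 < μ) (hl : l < N) : 0 ≤ X l := by
  have hrow (n : ℕ) (hn : n < l) := h.row_of_ne (n := n) (by omega) (by omega)
  have hd (n : ℕ) : 0 ≤ 2 * ((n : ℝ) + 1) := by positivity
  by_cases h₁ : 0 ≤ X 1
  · exact nonneg_of_forward_rec hμ hd hrow h.zero.ge h₁ l (by omega)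
  · have := nonneg_of_forward_rec (X := fun n => -X n) hμ hd
      (fun n hn => by linear_combination -hrow n hn) (by simp [h.zero]) (by linarith) (l + 1) le_rfl
    linarith [h.diag_pos hl]

lemma mul_succ_nonpos (hμ : 0 < μ) (n : ℕ) (hn : l < n) : X n * X (n + 1) ≤ 0 := by
  induction n using Nat.strong_decreasing_induction with
  | base => exact ⟨N, fun m hm _ => by simp [h.eq_zero_of_lt m hm]⟩
  | step n ih =>
    rcases lt_or_ge n N with hnN | hnN
    · have hrow := h.row_of_ne hnN (by omega)
      have hnext : X (n + 1) * X (n + 2) ≤ 0 := ih (n + 1) (by omega) (by omega)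
      have key : μ * (X n * X (n + 1))
          = μ * (X (n + 1) * X (n + 2)) - 2 * ((n : ℝ) + 1) * X (n + 1) ^ 2 := by
        linear_combination X (n + 1) * hrow
      have : μ * (X n * X (n + 1)) ≤ 0 := by
        rw [key]; nlinarith [sq_nonneg (X (n + 1)), mul_nonpos_of_nonneg_of_nonpos hμ.le hnext]
      exact nonpos_of_mul_nonpos_right this hμ
    · simp [h.eq_zero_of_lt (n + 1) (by omega)]

lemma abs_row (hμ : 0 < μ) {n : ℕ} (hln : l < n) (hn : n < N) :
    μ * |X n| = μ * |X (n + 2)| + 2 * ((n : ℝ) + 1) * |X (n + 1)| := by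
  have hrow := h.row_of_ne hn (by omega)
  have halt := h.mul_succ_nonpos hμ (n + 1) (by omega)
  have hprod : μ * X (n + 2) * (2 * ((n : ℝ) + 1) * X (n + 1)) ≤ 0 := by
    have : 0 ≤ μ * (2 * ((n : ℝ) + 1)) := by positivity
    nlinarith
  calc μ * |X n| = |μ * X (n + 2) - 2 * ((n : ℝ) + 1) * X (n + 1)| := by
        rw [← abs_of_pos hμ, ← abs_mul, abs_of_pos hμ]; congr 1; linarith
    _ = _ := by
        rw [abs_sub_eq_abs_add_abs_of_mul_nonpos hprod, abs_mul, abs_mul, abs_of_pos hμ,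
          abs_of_pos (by positivity : (0 : ℝ) < 2 * ((n : ℝ) + 1))]

lemma ratio_lower_bound (hμ : 0 < μ) (hμN : μ ≤ N) (j : ℕ) (hj : l < j) :
    (μ - (j + 1)) * |X j| ≤ μ * |X (j + 1)| := by
  induction j using Nat.strong_decreasing_induction with
  | base => exact ⟨N, fun m hm _ => by simp [h.eq_zero_of_lt m hm]; positivity⟩
  | step j ih =>
    rcases le_or_gt μ (j + 1) with hjμ | hjμ
    · nlinarith [abs_nonneg (X j), abs_nonneg (X (j + 1))]
    · have hjN : j + 2 ≤ N := by
        have : (j : ℝ) + 1 < N := hjμ.trans_le hμN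
        exact_mod_cast this
      have h₀ := h.abs_row hμ hj (by omega)
      have h₁ : μ * |X (j + 1)| = μ * |X (j + 3)| + 2 * ((j + 1 : ℝ) + 1) * |X (j + 2)| := by
        have := h.abs_row hμ (n := j + 1) (by omega) (by omega)
        push_cast at this
        exact this
      have h₂ : (μ - ((j + 1 : ℝ) + 2)) * |X (j + 2)| ≤ μ * |X (j + 3)| := by
        have := ih (j + 2) (by omega) (by omega)
        push_cast at this
        convert this using 3
        ring
      exact ratio_lower_bound_step (by positivity) hjμ (abs_nonneg _) h₀ h₁ h₂

lemma add_mul_diag_le_one (hμ : 0 < μ) (hμN : μ ≤ N) (hl : l < N) : (μ + l) * X (l + 1) ≤ 1 := by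
  have hpos := h.diag_pos hl
  have hnext : X (l + 2) ≤ 0 :=
    nonpos_of_mul_nonpos_right (h.mul_succ_nonpos hμ (l + 1) (by omega)) hpos
  have hr := h.ratio_lower_bound hμ hμN (l + 1) (by omega)
  rw [abs_of_pos hpos, abs_of_nonpos hnext] at hr
  push_cast at hr
  linarith [h.row_self hl, mul_nonneg hμ.le (h.pred_diag_nonneg hμ hl)]

lemma mul_diag_le_one (hμ : 0 < μ) (hμN : μ ≤ N) (hl : l < N) : μ * X (l + 1) ≤ 1 := by
  nlinarith [h.add_mul_diag_le_one hμ hμN hl, h.diag_pos hl, (Nat.cast_nonneg l : (0 : ℝ) ≤ l)]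

lemma tail_weighted_sum_abs_le (hμ : 0 < μ) {K : ℕ} (hK : l < K) :
    ∑ n ∈ Ico K N, 2 * ((n : ℝ) + 1) * |X (n + 1)| ≤ μ * (|X K| + |X (K + 1)|) := by
  set g : ℕ → ℝ := fun n => μ * (|X n| + |X (n + 1)|)
  rcases le_or_gt K N with hKN | hKN
  · calc ∑ n ∈ Ico K N, 2 * ((n : ℝ) + 1) * |X (n + 1)|
        = ∑ n ∈ Ico K N, -(g (n + 1) - g n) := sum_congr rfl fun n hn => by
          have := h.abs_row hμ (n := n) (by simp at hn; omega) (by simp at hn; omega)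
          simp only [g]; linarith
      _ = g K - g N := by rw [sum_neg_distrib, sum_Ico_sub g hKN]; ring
      _ ≤ g K := sub_le_self _ (by positivity)
  · rw [Ico_eq_empty_of_le hKN.le, sum_empty]
    positivity

lemma mul_abs_le_one (hμ : 0 < μ) (hμN : μ ≤ N) (hl : l < N) {n : ℕ}
    (hn : μ ≤ 2 * ((n : ℝ) + 1)) : μ * |X (n + 1)| ≤ 1 := by
  have hdiag := h.mul_diag_le_one hμ hμN hl
  have hsq : (μ * |X (n + 1)|) ^ 2 ≤ 1 := by
    rw [mul_pow, sq_abs]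
    nlinarith [h.weighted_sq_le hl n, mul_le_mul_of_nonneg_right hn (sq_nonneg (X (n + 1)))]
  exact (sq_le_one_iff_abs_le_one _).1 hsq |>.trans' (le_abs_self _)

lemma tail_sum_abs_le (hμ : 0 < μ) (hμN : μ ≤ N) (hl : l < N) {m : ℕ} (hlm : l ≤ m)
    (hμm : μ ≤ m + 1) : ∑ n ∈ Ico (m + 1) N, |X (n + 1)| ≤ μ⁻¹ := by
  have hweight : 2 * ((m : ℝ) + 2) * ∑ n ∈ Ico (m + 1) N, |X (n + 1)|
      ≤ ∑ n ∈ Ico (m + 1) N, 2 * ((n : ℝ) + 1) * |X (n + 1)| := by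
    rw [mul_sum]
    refine sum_le_sum fun n hn => mul_le_mul_of_nonneg_right ?_ (abs_nonneg _)
    have : (m : ℝ) + 1 ≤ n := by exact_mod_cast (mem_Ico.1 hn).1
    linarith
  have h₁ := h.mul_abs_le_one hμ hμN hl (n := m) (by linarith)
  have h₂ := h.mul_abs_le_one hμ hμN hl (n := m + 1) (by push_cast; linarith)
  have htail := h.tail_weighted_sum_abs_le hμ (K := m + 1) (by omega)
  have hsum : 0 ≤ ∑ n ∈ Ico (m + 1) N, |X (n + 1)| := sum_nonneg fun _ _ => abs_nonneg _
  rw [← one_div, le_div_iff₀ hμ]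
  nlinarith

lemma head_sum_abs_sq_le (hl : l < N) (K : ℕ) :
    (∑ n ∈ range K, |X (n + 1)|) ^ 2 ≤ K * X (l + 1) / 2 := by
  have hsq : 2 * ∑ n ∈ range K, X (n + 1) ^ 2 ≤ X (l + 1) := by
    refine le_trans ?_ (h.weighted_sum_sq_le hl (range K))
    rw [mul_sum]
    exact sum_le_sum fun n _ => by
      nlinarith [sq_nonneg (X (n + 1)), (Nat.cast_nonneg n : (0 : ℝ) ≤ n)]
  calc (∑ n ∈ range K, |X (n + 1)|) ^ 2 ≤ K * ∑ n ∈ range K, |X (n + 1)| ^ 2 := by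
        simpa using sq_sum_le_card_mul_sum_sq (s := range K) (f := fun n => |X (n + 1)|)
    _ ≤ K * X (l + 1) / 2 := by
        simp only [sq_abs]
        nlinarith [(Nat.cast_nonneg K : (0 : ℝ) ≤ K)]

lemma sum_abs_le (hμ : 0 < μ) (hμN : μ ≤ N) (hl : l < N) :
    ∑ n ∈ range N, |X (n + 1)| ≤ √((1 + μ⁻¹) / 2) + μ⁻¹ := by
  set m := l + ⌊μ⌋₊
  have hμm : μ < m + 1 := by
    have := Nat.lt_floor_add_one μ
    simp only [m, Nat.cast_add]; linarith [(Nat.cast_nonneg l : (0 : ℝ) ≤ l)]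
  have hsplit : ∑ n ∈ range N, |X (n + 1)|
      ≤ ∑ n ∈ range (m + 1), |X (n + 1)| + ∑ n ∈ Ico (m + 1) N, |X (n + 1)| := by
    rcases le_total (m + 1) N with hmN | hmN
    · rw [sum_range_add_sum_Ico _ hmN]
    · rw [Ico_eq_empty_of_le hmN, sum_empty, add_zero]
      exact sum_le_sum_of_subset_of_nonneg (range_subset_range.2 hmN) fun _ _ _ => abs_nonneg _
  have hhead : ∑ n ∈ range (m + 1), |X (n + 1)| ≤ √((1 + μ⁻¹) / 2) := by
    refine Real.le_sqrt_of_sq_le ((h.head_sum_abs_sq_le hl (m + 1)).trans ?_)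
    have hdiag := h.add_mul_diag_le_one hμ hμN hl
    have hinv : X (l + 1) ≤ μ⁻¹ := by
      rw [← one_div, le_div_iff₀ hμ]
      linarith [h.mul_diag_le_one hμ hμN hl]
    have hfloor : (⌊μ⌋₊ : ℝ) ≤ μ := Nat.floor_le hμ.le
    push_cast [m]
    nlinarith
  linarith [h.tail_sum_abs_le hμ hμN hl (m := m) (by omega) hμm.le]

end IsPaddedColumn

lemma mat1norm_inv_Tmat_le {N : ℕ} {μ : ℝ} (hμ : 0 < μ) (hμN : μ ≤ N) :
    mat1norm (Tmat N μ)⁻¹ ≤ √((1 + μ⁻¹) / 2) + μ⁻¹ := by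
  refine Real.iSup_le (fun l => ?_) (by positivity)
  calc ∑ i, |(Tmat N μ)⁻¹ i l| = ∑ n ∈ range N, |pad (fun i => (Tmat N μ)⁻¹ i l) (n + 1)| := by
        rw [← Fin.sum_univ_eq_sum_range (fun n => |pad (fun i => (Tmat N μ)⁻¹ i l) (n + 1)|)]
        simp
    _ ≤ _ := (isPaddedColumn_inv N μ l).sum_abs_le hμ hμN l.2

lemma sqrt_one_add_inv_div_two_add_inv_le {μ₀ μ s : ℝ} (hμ₀ : 0 < μ₀) (hμ : μ₀ < μ) (hs : 0 ≤ s)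
    (hs₀ : (1 + μ₀⁻¹) / 2 ≤ s ^ 2) : √((1 + μ⁻¹) / 2) + μ⁻¹ ≤ s + μ₀⁻¹ := by
  have hinv : μ⁻¹ ≤ μ₀⁻¹ := inv_anti₀ hμ₀ hμ.le
  have : √((1 + μ⁻¹) / 2) ≤ s := (Real.sqrt_le_left hs).2 (by linarith)
  linarith

theorem stmt12_general (μ : ℝ) (N : ℕ) (hN : 2 * μ < (N : ℝ)) :
    (10 < μ → mat1norm ((Tmat N μ)⁻¹) ≤ 0.806 + 1 / 20) ∧
    (100 < μ → mat1norm ((Tmat N μ)⁻¹) ≤ 0.736 + 1 / 200) ∧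
    (1000 < μ → mat1norm ((Tmat N μ)⁻¹) ≤ 0.727 + 1 / 2000) := by
  have key (μ₀ s : ℝ) (hμ₀ : 0 < μ₀) (hs : 0 ≤ s) (hs₀ : (1 + μ₀⁻¹) / 2 ≤ s ^ 2)
      (hμ : μ₀ < μ) : mat1norm (Tmat N μ)⁻¹ ≤ s + μ₀⁻¹ :=
    (mat1norm_inv_Tmat_le (hμ₀.trans hμ) (by linarith)).trans
      (sqrt_one_add_inv_div_two_add_inv_le hμ₀ hμ hs hs₀)
  refine ⟨fun hμ => ?_, fun hμ => ?_, fun hμ => ?_⟩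
  · exact (key 10 0.742 (by norm_num) (by norm_num) (by norm_num) hμ).trans (by norm_num)
  · exact (key 100 0.711 (by norm_num) (by norm_num) (by norm_num) hμ).trans (by norm_num)
  · exact (key 1000 0.7075 (by norm_num) (by norm_num) (by norm_num) hμ).trans (by norm_num)

/-- Improved uniform bounds for `‖T_N(μ)⁻¹‖₁` for large `μ`, for all even `N > 2μ`. -/
theorem stmt12 (μ : ℝ) (N : ℕ) (hNe : Even N) (hN : 2 * μ < (N : ℝ)) :
    (10 < μ → mat1norm ((Tmat N μ)⁻¹) ≤ 0.806 + 1 / 20) ∧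
    (100 < μ → mat1norm ((Tmat N μ)⁻¹) ≤ 0.736 + 1 / 200) ∧
    (1000 < μ → mat1norm ((Tmat N μ)⁻¹) ≤ 0.727 + 1 / 2000) :=
  stmt12_general μ N hN
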